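/- Let Λ(λ) = lim_{n→∞} (1/n) log 𝔼[e^{λ·X_n}] (which exists for every λ ∈ ℝ^d) and let Λ*(x) = sup_{λ∈ℝ^d} (λ·x − Λ(λ)) be its convex conjugate. A point y ∈ ℝ^d is an exposed point of Λ* if there is λ ∈ ℝ^d (an exposing hyperplane) such that λ·y − Λ*(y) > λ·x − Λ*(x) for all x ≠ y. Let 𝓕 be the set of exposed points of Λ* whose exposing hyperplane belongs to the interior of {λ ∈ ℝ^d : Λ(λ) < +∞}. Then for every open set G ⊆ ℝ^d: liminf_{n→∞} (1/n) log ℙ(X_n/n ∈ G) ≥ −inf_{x ∈ G ∩ 𝓕} Λ*(x). -/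

import Mathlib

/-!
Gärtner–Ellis lower bound by a covering argument. Each step has length at most `L`, so
`|X_n| ≤ nL`: `Λ` is finite everywhere and `X_n / n` lives in the compact ball of radius `L`.
Let `y` be exposed by `λ`. By Fenchel–Young, every `x ≠ y` has some `μ` with
`λ·x − Λ(λ) < μ·x − Λ(μ)`, and an exponential Chebyshev bound after tilting from `λ` to `μ`
shows that a small ball around `x` carries an exponentially small share of `𝔼[e^{λ·X_n}]`.
Finitely many such balls cover `{|v| ≤ L, |v − y| ≥ δ}`, so eventually half of `𝔼[e^{λ·X_n}]`
comes from `{X_n / n ∈ B(y, δ)}`, where `e^{λ·X_n} ≤ e^{n(λ·y + δ|λ|)}`. Hence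
`ℙ(X_n / n ∈ B(y, δ)) ≥ ½ e^{n(Λ_n(λ) − λ·y − δ|λ|)}`, and `δ → 0` gives
`liminf ≥ Λ(λ) − λ·y ≥ −Λ*(y)`.
-/

open MeasureTheory ProbabilityTheory Filter
open scoped ENNReal

noncomputable section

/-- The natural embedding of the lattice `ℤ^d` into Euclidean space `ℝ^d`. -/
def emb (d : ℕ) (z : Fin d → ℤ) : EuclideanSpace ℝ (Fin d) := WithLp.toLp 2 (fun i => (z i : ℝ))

/-- A finite family `u 0, …, u (m-1)` of lattice vectors is *nice* if for every nonzero
direction `l ∈ ℝ^d` there is some `i` with `l · u i > 0`. -/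
def IsNice (d m : ℕ) (u : Fin m → Fin d → ℤ) : Prop :=
  ∀ l : EuclideanSpace ℝ (Fin d), l ≠ 0 → ∃ i : Fin m, 0 < (inner ℝ l (emb d (u i)) : ℝ)

/-- A stationary `ℤ^d`-valued random field `η` on a probability space `(Ω, P)`, with bounded
steps (i), finite-range dependence of range `M` (ii), and the ellipticity condition (iii)
with respect to a nice set of vectors `u 0, …, u (m-1)`. -/
structure DWRE (d : ℕ) (Ω : Type) [MeasurableSpace Ω] where
  P : Measure Ω
  isProb : IsProbabilityMeasure P
  η : (Fin d → ℤ) → Ω → (Fin d → ℤ)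
  meas_η : ∀ z, Measurable (η z)
  stationary : ∀ y : Fin d → ℤ,
    Measure.map (fun ω => fun z => η (z + y) ω) P = Measure.map (fun ω => fun z => η z ω) P
  L : ℝ
  L_pos : 0 < L
  bounded : ∀ z : Fin d → ℤ, ∀ᵐ ω ∂P, ‖emb d (η z ω)‖ ≤ L
  M : ℝ
  M_pos : 0 < M
  finiteRange : ∀ z : Fin d → ℤ,
    Indep (MeasurableSpace.comap (η z) inferInstance)
      (⨆ w ∈ {w : Fin d → ℤ | M < dist (emb d w) (emb d z)},
        MeasurableSpace.comap (η w) inferInstance) P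
  m : ℕ
  u : Fin m → Fin d → ℤ
  nice : IsNice d m u
  c : ℝ
  c_pos : 0 < c
  ellipticity : ∀ (z : Fin d → ℤ) (i : Fin m), ∀ᵐ ω ∂P,
    c < condExp
      (⨆ w ∈ {w : Fin d → ℤ | w ≠ z ∧ dist (emb d w) (emb d z) ≤ M},
        MeasurableSpace.comap (η w) inferInstance) P
      (Set.indicator {ω' | η z ω' = u i} (fun _ => (1 : ℝ))) ω

attribute [instance] DWRE.isProb

namespace DWRE

variable {d : ℕ} {Ω : Type} [MeasurableSpace Ω]

/-- The deterministic walk in the random environment: `X 0 = 0`, `X (n+1) = X n + η (X n)`. -/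
def walk (E : DWRE d Ω) : ℕ → Ω → Fin d → ℤ
  | 0, _ => 0
  | n + 1, ω => walk E n ω + E.η (walk E n ω) ω

/-- The σ-algebra generated by the variables `η z` for `z ∉ S` within distance `M` of `S`. -/
def Fnear (E : DWRE d Ω) (S : Set (Fin d → ℤ)) : MeasurableSpace Ω :=
  ⨆ w ∈ {w : Fin d → ℤ | w ∉ S ∧ ∃ y ∈ S, dist (emb d w) (emb d y) ≤ E.M},
    MeasurableSpace.comap (E.η w) inferInstance

/-- The hitting time `T_u = inf {n : X n · l ≥ u}` (with value `⊤` if there is no such `n`). -/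
def hitT (E : DWRE d Ω) (l : EuclideanSpace ℝ (Fin d)) (u : ℝ) (ω : Ω) : ℕ∞ :=
  sInf {t : ℕ∞ | ∃ n : ℕ, t = (n : ℕ∞) ∧ u ≤ (inner ℝ l (emb d (E.walk n ω)) : ℝ)}

/-- `D_1`, the time of the first jump of the walk over the hyperplane through the origin
orthogonal to `l`, in the direction of `l`. -/
def D1 (E : DWRE d Ω) (l : EuclideanSpace ℝ (Fin d)) (ω : Ω) : ℕ∞ :=
  sInf {t : ℕ∞ | ∃ n : ℕ, t = (n : ℕ∞) ∧ 1 ≤ n ∧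
    (inner ℝ l (emb d (E.walk (n - 1) ω)) : ℝ) < 0 ∧ 0 ≤ (inner ℝ l (emb d (E.walk n ω)) : ℝ)}

/-- `log ℙ(A)`, with `log 0 = -∞`, as an extended real number. -/
def plog (E : DWRE d Ω) (A : Set Ω) : EReal := ENNReal.log (E.P A)

/-- The sequence `n ↦ (1/n) log ℙ(A n)`, as extended real numbers. -/
def rate (E : DWRE d Ω) (A : ℕ → Set Ω) (n : ℕ) : EReal :=
  (((n : ℝ)⁻¹ : ℝ) : EReal) * E.plog (A n)

/-- `T ≤ x` for an extended natural time `T` and a real bound `x` (in particular `T < ∞`). -/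
def timeLE (t : ℕ∞) (x : ℝ) : Prop := ∃ n : ℕ, t = (n : ℕ∞) ∧ (n : ℝ) ≤ x

/-- The sequence `n ↦ (1/n) log 𝔼[exp (λ · X n)]`. -/
def mgfRate (E : DWRE d Ω) (lam : EuclideanSpace ℝ (Fin d)) (n : ℕ) : EReal :=
  (((n : ℝ)⁻¹ * Real.log (∫ ω, Real.exp ((inner ℝ lam (emb d (E.walk n ω)) : ℝ)) ∂E.P) : ℝ) : EReal)

/-- Convexity for `EReal`-valued functions on `ℝ^d`. -/
def ConvexE {d : ℕ} (f : EuclideanSpace ℝ (Fin d) → EReal) : Prop :=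
  ∀ x y : EuclideanSpace ℝ (Fin d), ∀ a b : ℝ, 0 ≤ a → 0 ≤ b → a + b = 1 →
    f (a • x + b • y) ≤ (a : EReal) * f x + (b : EReal) * f y

/-- Concavity for `EReal`-valued functions on `(0, ∞)`. -/
def ConcavePosE (γ : ℝ → EReal) : Prop :=
  ∀ k₁ k₂ : ℝ, 0 < k₁ → 0 < k₂ → ∀ a b : ℝ, 0 ≤ a → 0 ≤ b → a + b = 1 →
    (a : EReal) * γ k₁ + (b : EReal) * γ k₂ ≤ γ (a * k₁ + b * k₂)

/-- The convex conjugate `Λ*(x) = sup_λ (λ·x − Λ(λ))` of an `EReal`-valued function on `ℝ^d`. -/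
def conj {d : ℕ} (Λ : EuclideanSpace ℝ (Fin d) → EReal) (x : EuclideanSpace ℝ (Fin d)) : EReal :=
  ⨆ lam : EuclideanSpace ℝ (Fin d), (((inner ℝ lam x : ℝ)) : EReal) - Λ lam

end DWRE

open DWRE

variable {d : ℕ} {Ω : Type} [MeasurableSpace Ω]

open Real Metric
open scoped InnerProductSpace Topology

lemma exists_tendsto_of_tendsto_coe_of_abs_le {α : Type*} {l : Filter α} [l.NeBot]
    {u : α → ℝ} {x : EReal} {C : ℝ} (hu : ∀ᶠ n in l, |u n| ≤ C)
    (h : Tendsto (fun n => (u n : EReal)) l (𝓝 x)) : ∃ r : ℝ, x = r ∧ Tendsto u l (𝓝 r) := by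
  have hle : x ≤ C := le_of_tendsto h (hu.mono fun n hn => EReal.coe_le_coe (abs_le.mp hn).2)
  have hge : ((-C : ℝ) : EReal) ≤ x :=
    ge_of_tendsto h (hu.mono fun n hn => EReal.coe_le_coe (abs_le.mp hn).1)
  have hx : x = (x.toReal : EReal) :=
    (EReal.coe_toReal (hle.trans_lt (EReal.coe_lt_top C)).ne
      ((EReal.bot_lt_coe _).trans_le hge).ne').symm
  rw [hx, EReal.tendsto_coe] at h
  exact ⟨x.toReal, hx, h⟩

lemma abs_inner_sub_inner_le_of_mem_ball {V : Type*} [NormedAddCommGroup V]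
    [InnerProductSpace ℝ V] (θ : V) {v z : V} {ρ : ℝ} (hv : v ∈ ball z ρ) :
    |⟪θ, v⟫_ℝ - ⟪θ, z⟫_ℝ| ≤ ‖θ‖ * ρ := by
  rw [← inner_sub_right]
  exact (abs_real_inner_le_norm _ _).trans
    (mul_le_mul_of_nonneg_left (mem_ball_iff_norm.mp hv).le (norm_nonneg θ))

lemma inner_eq_mul_inner_inv_smul {V : Type*} [NormedAddCommGroup V] [InnerProductSpace ℝ V]
    (θ x : V) {n : ℕ} (hn : n ≠ 0) : ⟪θ, x⟫_ℝ = n * ⟪θ, (n : ℝ)⁻¹ • x⟫_ℝ := by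
  rw [real_inner_smul_right, mul_inv_cancel_left₀ (Nat.cast_ne_zero.mpr hn)]

lemma mul_inv_mul_sub_inv_mul_sub {n : ℝ} (hn : n ≠ 0) (a b c : ℝ) :
    n * (n⁻¹ * a - n⁻¹ * b - c) = a - b - n * c := by
  field_simp

lemma le_liminf_log_measure_of_eventually {P : Measure Ω} {A : ℕ → Set Ω} {b : ℝ}
    (h : ∀ a < b, ∀ᶠ n : ℕ in atTop, exp (n * a) ≤ P.real (A n)) :
    (b : EReal) ≤
      liminf (fun n : ℕ => (((n : ℝ)⁻¹ : ℝ) : EReal) * ENNReal.log (P (A n))) atTop := by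
  refine EReal.ge_of_forall_gt_iff_ge.mp fun a ha => le_liminf_of_le (by isBoundedDefault) ?_
  filter_upwards [h a (EReal.coe_lt_coe_iff.mp ha), eventually_ge_atTop 1] with n hPA hn
  have hlog : ((n * a : ℝ) : EReal) ≤ ENNReal.log (P (A n)) := calc
    ((n * a : ℝ) : EReal) = ENNReal.log (ENNReal.ofReal (exp (n * a))) := by
      rw [ENNReal.log_ofReal, if_neg (exp_pos _).not_ge, log_exp]
    _ ≤ ENNReal.log (P (A n)) := ENNReal.log_le_log (ENNReal.ofReal_le_of_le_toReal hPA)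
  calc (a : EReal) = (((n : ℝ)⁻¹ : ℝ) : EReal) * ((n * a : ℝ) : EReal) := by
        rw [← EReal.coe_mul, inv_mul_cancel_left₀ (by positivity)]
    _ ≤ _ := mul_le_mul_of_nonneg_left hlog (EReal.coe_nonneg.mpr (by positivity))

section TiltedMass

variable {V : Type*} [NormedAddCommGroup V] [InnerProductSpace ℝ V]
  {P : Measure Ω} {S : ℕ → Ω → V} {L : ℝ} {Λ : V → ℝ}

def expMoment (P : Measure Ω) (S : ℕ → Ω → V) (θ : V) (n : ℕ) : ℝ :=
  ∫ ω, exp ⟪θ, S n ω⟫_ℝ ∂P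

def tiltedFraction (P : Measure Ω) (S : ℕ → Ω → V) (θ : V) (U : Set V) (n : ℕ) : ℝ :=
  (∫ ω in {ω | (n : ℝ)⁻¹ • S n ω ∈ U}, exp ⟪θ, S n ω⟫_ℝ ∂P) / expMoment P S θ n

def IsTiltedNegligible (P : Measure Ω) (S : ℕ → Ω → V) (θ : V) (U : Set V) : Prop :=
  Tendsto (tiltedFraction P S θ U) atTop (𝓝 0)

lemma ae_abs_inner_le (hSL : ∀ n, ∀ᵐ ω ∂P, ‖S n ω‖ ≤ n * L) (θ : V) (n : ℕ) :
    ∀ᵐ ω ∂P, |⟪θ, S n ω⟫_ℝ| ≤ ‖θ‖ * (n * L) := by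
  filter_upwards [hSL n] with ω hω
  exact (abs_real_inner_le_norm _ _).trans (mul_le_mul_of_nonneg_left hω (norm_nonneg θ))

lemma integrable_exp_inner [MeasurableSpace V] [BorelSpace V] [IsFiniteMeasure P]
    (hS : ∀ n, Measurable (S n)) (hSL : ∀ n, ∀ᵐ ω ∂P, ‖S n ω‖ ≤ n * L)
    (θ : V) (n : ℕ) : Integrable (fun ω => exp ⟪θ, S n ω⟫_ℝ) P := by
  refine .of_bound ((continuous_exp.comp (continuous_const.inner continuous_id)).measurable.comp
    (hS n)).aestronglyMeasurable (exp (‖θ‖ * (n * L))) ?_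
  filter_upwards [ae_abs_inner_le hSL θ n] with ω hω
  rw [norm_of_nonneg (exp_pos _).le]
  exact exp_le_exp.mpr ((le_abs_self _).trans hω)

lemma expMoment_pos [NeZero P] {θ : V}
    (hint : ∀ n, Integrable (fun ω => exp ⟪θ, S n ω⟫_ℝ) P) (n : ℕ) :
    0 < expMoment P S θ n :=
  integral_exp_pos (hint n)

lemma abs_inv_mul_log_expMoment_le [MeasurableSpace V] [BorelSpace V]
    [IsProbabilityMeasure P] (hS : ∀ n, Measurable (S n))
    (hSL : ∀ n, ∀ᵐ ω ∂P, ‖S n ω‖ ≤ n * L) (θ : V) {n : ℕ} (hn : n ≠ 0) :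
    |(n : ℝ)⁻¹ * log (expMoment P S θ n)| ≤ ‖θ‖ * L := by
  have hint := integrable_exp_inner hS hSL θ n
  have hpos := expMoment_pos (integrable_exp_inner hS hSL θ) n
  have hupper : expMoment P S θ n ≤ exp (‖θ‖ * (n * L)) := by
    simpa [expMoment] using integral_mono_ae hint (integrable_const _)
      ((ae_abs_inner_le hSL θ n).mono fun ω hω => exp_le_exp.mpr ((le_abs_self _).trans hω))
  have hlower : exp (-(‖θ‖ * (n * L))) ≤ expMoment P S θ n := by
    simpa [expMoment] using integral_mono_ae (integrable_const _) hint
      ((ae_abs_inner_le hSL θ n).mono fun ω hω => exp_le_exp.mpr (neg_le_of_abs_le hω))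
  have hlog : |log (expMoment P S θ n)| ≤ n * (‖θ‖ * L) := by
    rw [abs_le]
    constructor
    · linarith [log_le_log (exp_pos _) hlower, log_exp (-(‖θ‖ * (n * L)))]
    · linarith [log_le_log hpos hupper, log_exp (‖θ‖ * (n * L))]
  rw [abs_mul, abs_inv, Nat.abs_cast, inv_mul_le_iff₀ (by positivity)]
  exact hlog

lemma tiltedFraction_nonneg (θ : V) (U : Set V) (n : ℕ) : 0 ≤ tiltedFraction P S θ U n :=
  div_nonneg (integral_nonneg fun _ => (exp_pos _).le) (integral_nonneg fun _ => (exp_pos _).le)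

lemma tiltedFraction_mono {θ : V} (hint : ∀ n, Integrable (fun ω => exp ⟪θ, S n ω⟫_ℝ) P)
    {U W : Set V} (hUW : U ⊆ W) (n : ℕ) : tiltedFraction P S θ U n ≤ tiltedFraction P S θ W n :=
  div_le_div_of_nonneg_right (setIntegral_mono_set (hint n).integrableOn
    (.of_forall fun _ => (exp_pos _).le) (.of_forall fun _ hω => hUW hω))
    (integral_nonneg fun _ => (exp_pos _).le)

lemma tiltedFraction_union_le {θ : V} (hint : ∀ n, Integrable (fun ω => exp ⟪θ, S n ω⟫_ℝ) P)
    (U W : Set V) (n : ℕ) :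
    tiltedFraction P S θ (U ∪ W) n ≤ tiltedFraction P S θ U n + tiltedFraction P S θ W n := by
  rw [tiltedFraction, tiltedFraction, tiltedFraction, ← add_div]
  refine div_le_div_of_nonneg_right ?_ (integral_nonneg fun _ => (exp_pos _).le)
  rw [← integral_add_measure (hint n).restrict (hint n).restrict]
  exact integral_mono_measure (Measure.restrict_union_le _ _) (.of_forall fun _ => (exp_pos _).le)
    ((hint n).restrict.add_measure (hint n).restrict)

lemma isTiltedNegligible_empty (θ : V) : IsTiltedNegligible P S θ ∅ :=
  tendsto_const_nhds.congr fun n => by simp [tiltedFraction]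

lemma IsTiltedNegligible.mono {θ : V} (hint : ∀ n, Integrable (fun ω => exp ⟪θ, S n ω⟫_ℝ) P)
    {U W : Set V} (hW : IsTiltedNegligible P S θ W) (hUW : U ⊆ W) :
    IsTiltedNegligible P S θ U :=
  squeeze_zero (tiltedFraction_nonneg θ U) (tiltedFraction_mono hint hUW) hW

lemma IsTiltedNegligible.union {θ : V} (hint : ∀ n, Integrable (fun ω => exp ⟪θ, S n ω⟫_ℝ) P)
    {U W : Set V} (hU : IsTiltedNegligible P S θ U) (hW : IsTiltedNegligible P S θ W) :
    IsTiltedNegligible P S θ (U ∪ W) :=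
  squeeze_zero (tiltedFraction_nonneg θ _) (tiltedFraction_union_le hint U W)
    (by simpa using hU.add hW)

lemma IsCompact.isTiltedNegligible {θ : V} (hint : ∀ n, Integrable (fun ω => exp ⟪θ, S n ω⟫_ℝ) P)
    {K : Set V} (hK : IsCompact K) (h : ∀ x ∈ K, ∃ U ∈ 𝓝 x, IsTiltedNegligible P S θ U) :
    IsTiltedNegligible P S θ K :=
  hK.induction_on (isTiltedNegligible_empty θ) (fun _ _ hUW hW => hW.mono hint hUW)
    (fun _ _ hU hW => hU.union hint hW) fun x hx =>
      let ⟨U, hU, hneg⟩ := h x hx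
      ⟨U, mem_nhdsWithin_of_mem_nhds hU, hneg⟩

lemma isTiltedNegligible_compl_closedBall (hSL : ∀ n, ∀ᵐ ω ∂P, ‖S n ω‖ ≤ n * L) (θ : V) :
    IsTiltedNegligible P S θ (closedBall 0 L)ᶜ := by
  refine tendsto_const_nhds.congr' ?_
  filter_upwards [eventually_ge_atTop 1] with n hn
  have hnull : P {ω | (n : ℝ)⁻¹ • S n ω ∈ (closedBall 0 L)ᶜ} = 0 := by
    refine measure_mono_null (fun ω hω => ?_) (ae_iff.mp (hSL n))
    intro hle
    apply hω
    rw [mem_closedBall_zero_iff, norm_smul, norm_inv, Real.norm_natCast,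
      inv_mul_le_iff₀ (by positivity)]
    exact hle
  rw [tiltedFraction, Measure.restrict_eq_zero.mpr hnull, integral_zero_measure, zero_div]

/-- Exponential Chebyshev bound: tilting from `lam` to `μ` shows that the ball carries at most
`exp (-n (⟪μ - lam, z⟫ - ρ ‖μ - lam‖)) · expMoment μ / expMoment lam`. -/
lemma isTiltedNegligible_ball [MeasurableSpace V] [BorelSpace V]
    [IsProbabilityMeasure P] (hS : ∀ n, Measurable (S n))
    (hSL : ∀ n, ∀ᵐ ω ∂P, ‖S n ω‖ ≤ n * L)
    (hΛ : ∀ θ, Tendsto (fun n : ℕ => (n : ℝ)⁻¹ * log (expMoment P S θ n)) atTop (𝓝 (Λ θ)))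
    {lam μ z : V} {ρ : ℝ} (h : Λ μ - Λ lam < ⟪μ - lam, z⟫_ℝ - ‖μ - lam‖ * ρ) :
    IsTiltedNegligible P S lam (ball z ρ) := by
  set c := ⟪μ - lam, z⟫_ℝ - ‖μ - lam‖ * ρ
  have hrate : Tendsto (fun n : ℕ => (n : ℝ) * ((n : ℝ)⁻¹ * log (expMoment P S μ n) -
      (n : ℝ)⁻¹ * log (expMoment P S lam n) - c)) atTop atBot :=
    tendsto_natCast_atTop_atTop.atTop_mul_neg (by linarith) (((hΛ μ).sub (hΛ lam)).sub_const c)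
  refine squeeze_zero' (.of_forall (tiltedFraction_nonneg lam _)) ?_
    (tendsto_exp_atBot.comp hrate)
  filter_upwards [eventually_ne_atTop 0] with n hn
  have hpt : ∀ ω ∈ {ω | (n : ℝ)⁻¹ • S n ω ∈ ball z ρ},
      exp ⟪lam, S n ω⟫_ℝ ≤ exp (-(n * c)) * exp ⟪μ, S n ω⟫_ℝ := by
    intro ω hω
    have hball := abs_inner_sub_inner_le_of_mem_ball (μ - lam) hω
    rw [← exp_add, exp_le_exp, inner_eq_mul_inner_inv_smul μ _ hn,
      inner_eq_mul_inner_inv_smul lam _ hn]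
    have : c ≤ ⟪μ, (n : ℝ)⁻¹ • S n ω⟫_ℝ - ⟪lam, (n : ℝ)⁻¹ • S n ω⟫_ℝ := by
      rw [← inner_sub_left]; linarith [(abs_le.mp hball).1]
    nlinarith [(Nat.cast_nonneg n : (0 : ℝ) ≤ n)]
  have hmeas : MeasurableSet {ω | (n : ℝ)⁻¹ • S n ω ∈ ball z ρ} :=
    (continuous_const_smul ((n : ℝ)⁻¹)).measurable.comp (hS n) measurableSet_ball
  have hintμ := integrable_exp_inner hS hSL μ n
  have hZ := expMoment_pos (integrable_exp_inner hS hSL lam) n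
  calc tiltedFraction P S lam (ball z ρ) n
      ≤ exp (-(n * c)) * expMoment P S μ n / expMoment P S lam n := by
        refine div_le_div_of_nonneg_right ?_ hZ.le
        calc _ ≤ ∫ ω in {ω | (n : ℝ)⁻¹ • S n ω ∈ ball z ρ}, exp (-(n * c)) * exp ⟪μ, S n ω⟫_ℝ ∂P :=
              setIntegral_mono_on (integrable_exp_inner hS hSL lam n).integrableOn
                (hintμ.const_mul _).integrableOn hmeas hpt
          _ ≤ _ := by
              rw [integral_const_mul]
              exact mul_le_mul_of_nonneg_left (setIntegral_le_integral hintμ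
                (.of_forall fun _ => (exp_pos _).le)) (exp_pos _).le
    _ = exp (n * ((n : ℝ)⁻¹ * log (expMoment P S μ n) -
          (n : ℝ)⁻¹ * log (expMoment P S lam n) - c)) := by
        rw [mul_inv_mul_sub_inv_mul_sub (Nat.cast_ne_zero.mpr hn), exp_sub, exp_sub, exp_log hZ,
          exp_log (expMoment_pos (integrable_exp_inner hS hSL μ) n), exp_neg]
        ring

lemma exists_isTiltedNegligible_nhds [MeasurableSpace V] [BorelSpace V]
    [IsProbabilityMeasure P] (hS : ∀ n, Measurable (S n))
    (hSL : ∀ n, ∀ᵐ ω ∂P, ‖S n ω‖ ≤ n * L)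
    (hΛ : ∀ θ, Tendsto (fun n : ℕ => (n : ℝ)⁻¹ * log (expMoment P S θ n)) atTop (𝓝 (Λ θ)))
    {lam μ x : V} (h : ⟪lam, x⟫_ℝ - Λ lam < ⟪μ, x⟫_ℝ - Λ μ) :
    ∃ U ∈ 𝓝 x, IsTiltedNegligible P S lam U := by
  obtain ⟨ρ, hρ, hsmall⟩ := exists_pos_mul_lt (sub_pos.mpr h) ‖μ - lam‖
  refine ⟨ball x ρ, ball_mem_nhds x hρ, isTiltedNegligible_ball (μ := μ) hS hSL hΛ ?_⟩
  rw [inner_sub_left]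
  linarith

lemma isTiltedNegligible_compl_ball [ProperSpace V] [MeasurableSpace V]
    [BorelSpace V] [IsProbabilityMeasure P] (hS : ∀ n, Measurable (S n))
    (hSL : ∀ n, ∀ᵐ ω ∂P, ‖S n ω‖ ≤ n * L)
    (hΛ : ∀ θ, Tendsto (fun n : ℕ => (n : ℝ)⁻¹ * log (expMoment P S θ n)) atTop (𝓝 (Λ θ)))
    {lam y : V} (hexp : ∀ x ≠ y, ∃ μ, ⟪lam, x⟫_ℝ - Λ lam < ⟪μ, x⟫_ℝ - Λ μ)
    {δ : ℝ} (hδ : 0 < δ) : IsTiltedNegligible P S lam (ball y δ)ᶜ := by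
  have hint := integrable_exp_inner hS hSL lam
  have hK : IsTiltedNegligible P S lam (closedBall 0 L \ ball y δ) :=
    ((isCompact_closedBall 0 L).diff isOpen_ball).isTiltedNegligible hint fun x hx =>
      let ⟨_, hμ⟩ := hexp x fun hxy => hx.2 (hxy ▸ mem_ball_self hδ)
      exists_isTiltedNegligible_nhds hS hSL hΛ hμ
  exact (hK.union hint (isTiltedNegligible_compl_closedBall hSL lam)).mono hint
    fun v hv => (em (v ∈ closedBall 0 L)).imp (fun h => ⟨h, hv⟩) id

lemma IsTiltedNegligible.eventually_expMoment_le [MeasurableSpace V] [BorelSpace V]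
    [NeZero P] {θ : V} (hS : ∀ n, Measurable (S n))
    (hint : ∀ n, Integrable (fun ω => exp ⟪θ, S n ω⟫_ℝ) P) {U : Set V} (hU : MeasurableSet U)
    (h : IsTiltedNegligible P S θ Uᶜ) :
    ∀ᶠ n : ℕ in atTop,
      expMoment P S θ n ≤ 2 * ∫ ω in {ω | (n : ℝ)⁻¹ • S n ω ∈ U}, exp ⟪θ, S n ω⟫_ℝ ∂P := by
  filter_upwards [h.eventually_lt_const (by norm_num : (0 : ℝ) < 1 / 2)] with n hn
  have hsplit : (∫ ω in {ω | (n : ℝ)⁻¹ • S n ω ∈ U}, exp ⟪θ, S n ω⟫_ℝ ∂P) +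
      ∫ ω in {ω | (n : ℝ)⁻¹ • S n ω ∈ Uᶜ}, exp ⟪θ, S n ω⟫_ℝ ∂P = expMoment P S θ n :=
    integral_add_compl ((continuous_const_smul ((n : ℝ)⁻¹)).measurable.comp (hS n) hU) (hint n)
  rw [tiltedFraction, div_lt_iff₀ (expMoment_pos hint n)] at hn
  linarith

theorem eventually_exp_mul_le_measureReal [ProperSpace V] [MeasurableSpace V]
    [BorelSpace V] [IsProbabilityMeasure P] (hS : ∀ n, Measurable (S n))
    (hSL : ∀ n, ∀ᵐ ω ∂P, ‖S n ω‖ ≤ n * L)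
    (hΛ : ∀ θ, Tendsto (fun n : ℕ => (n : ℝ)⁻¹ * log (expMoment P S θ n)) atTop (𝓝 (Λ θ)))
    {lam y : V} (hexp : ∀ x ≠ y, ∃ μ, ⟪lam, x⟫_ℝ - Λ lam < ⟪μ, x⟫_ℝ - Λ μ)
    {G : Set V} (hG : G ∈ 𝓝 y) {a : ℝ} (ha : a < Λ lam - ⟪lam, y⟫_ℝ) :
    ∀ᶠ n : ℕ in atTop, exp (n * a) ≤ P.real {ω | (n : ℝ)⁻¹ • S n ω ∈ G} := by
  obtain ⟨δ₀, hδ₀, hG₀⟩ := Metric.mem_nhds_iff.mp hG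
  obtain ⟨δ₁, hδ₁, hsmall⟩ := exists_pos_mul_lt (sub_pos.mpr ha) ‖lam‖
  set δ := min δ₀ δ₁
  set c := ⟪lam, y⟫_ℝ + ‖lam‖ * δ
  have hδ : 0 < δ := lt_min hδ₀ hδ₁
  have hca : c < Λ lam - a := by
    linarith [mul_le_mul_of_nonneg_left (min_le_right δ₀ δ₁) (norm_nonneg lam)]
  have hlim : Tendsto (fun n : ℕ => (n : ℝ)⁻¹ * log (expMoment P S lam n) -
      (n : ℝ)⁻¹ * log 2 - c) atTop (𝓝 (Λ lam - 0 * log 2 - c)) :=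
    ((hΛ lam).sub ((tendsto_inv_atTop_zero.comp tendsto_natCast_atTop_atTop).mul_const _)).sub_const
      c
  have hint := integrable_exp_inner hS hSL lam
  filter_upwards [hlim.eventually_const_lt (show a < Λ lam - 0 * log 2 - c by linarith),
    (isTiltedNegligible_compl_ball hS hSL hΛ hexp hδ).eventually_expMoment_le hS hint
      measurableSet_ball, eventually_ne_atTop 0] with n hlt hZ hn
  have hZpos := expMoment_pos hint n
  have hpt : ∀ ω ∈ {ω | (n : ℝ)⁻¹ • S n ω ∈ ball y δ}, ‖exp ⟪lam, S n ω⟫_ℝ‖ ≤ exp (n * c) := by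
    intro ω hω
    rw [norm_of_nonneg (exp_pos _).le, exp_le_exp, inner_eq_mul_inner_inv_smul lam _ hn]
    exact mul_le_mul_of_nonneg_left
      (by linarith [(abs_le.mp (abs_inner_sub_inner_le_of_mem_ball lam hω)).2]) (Nat.cast_nonneg n)
  have hball : ∫ ω in {ω | (n : ℝ)⁻¹ • S n ω ∈ ball y δ}, exp ⟪lam, S n ω⟫_ℝ ∂P ≤
      exp (n * c) * P.real {ω | (n : ℝ)⁻¹ • S n ω ∈ G} := calc
    _ ≤ ‖∫ ω in {ω | (n : ℝ)⁻¹ • S n ω ∈ ball y δ}, exp ⟪lam, S n ω⟫_ℝ ∂P‖ := le_norm_self _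
    _ ≤ exp (n * c) * P.real {ω | (n : ℝ)⁻¹ • S n ω ∈ ball y δ} :=
      norm_setIntegral_le_of_norm_le_const (measure_lt_top _ _) hpt
    _ ≤ _ := mul_le_mul_of_nonneg_left (measureReal_mono
      (fun ω hω => hG₀ (ball_subset_ball (min_le_left δ₀ δ₁) hω)) (measure_ne_top _ _))
      (exp_pos _).le
  have hn' : (n : ℝ) ≠ 0 := Nat.cast_ne_zero.mpr hn
  calc exp (n * a)
      ≤ exp (log (expMoment P S lam n) - log 2 - n * c) := by
        refine exp_le_exp.mpr ?_
        have := mul_le_mul_of_nonneg_left hlt.le (Nat.cast_nonneg (α := ℝ) n)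
        rwa [mul_inv_mul_sub_inv_mul_sub hn'] at this
    _ = expMoment P S lam n / (2 * exp (n * c)) := by
        rw [exp_sub, exp_sub, exp_log hZpos, exp_log two_pos, div_div]
    _ ≤ P.real {ω | (n : ℝ)⁻¹ • S n ω ∈ G} := by
        rw [div_le_iff₀ (by positivity)]
        linarith

end TiltedMass

lemma emb_add (a b : Fin d → ℤ) : emb d (a + b) = emb d a + emb d b := by
  ext i
  simp [emb]

lemma emb_zero : emb d 0 = 0 := by
  ext i
  simp [emb]

namespace DWRE

lemma measurable_walk (E : DWRE d Ω) : ∀ n, Measurable (E.walk n)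
  | 0 => measurable_const
  | n + 1 => (measurable_walk E n).add
      ((measurable_from_prod_countable_left (f := fun p : Ω × (Fin d → ℤ) => E.η p.2 p.1)
        fun z => E.meas_η z).comp
        (measurable_id.prodMk (measurable_walk E n)))

lemma norm_walk_le (E : DWRE d Ω) (n : ℕ) : ∀ᵐ ω ∂E.P, ‖emb d (E.walk n ω)‖ ≤ n * E.L := by
  filter_upwards [ae_all_iff.mpr E.bounded] with ω hω
  induction n with
  | zero => simp [walk, emb_zero]
  | succ n ih =>
    rw [walk, emb_add, Nat.cast_succ, add_one_mul]
    exact (norm_add_le _ _).trans (add_le_add ih (hω _))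

lemma coe_sub_le_conj (f : EuclideanSpace ℝ (Fin d) → ℝ) (lam x : EuclideanSpace ℝ (Fin d)) :
    ((⟪lam, x⟫_ℝ - f lam : ℝ) : EReal) ≤ conj (fun θ => (f θ : EReal)) x :=
  le_iSup_of_le lam (EReal.coe_sub _ _).le

lemma exists_lt_of_exposed {f : EuclideanSpace ℝ (Fin d) → ℝ} {lam y : EuclideanSpace ℝ (Fin d)}
    (hexp : ∀ x ≠ y, (⟪lam, x⟫_ℝ : EReal) - conj (fun θ => (f θ : EReal)) x <
      (⟪lam, y⟫_ℝ : EReal) - conj (fun θ => (f θ : EReal)) y) :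
    ∀ x ≠ y, ∃ μ, ⟪lam, x⟫_ℝ - f lam < ⟪μ, x⟫_ℝ - f μ := by
  intro x hx
  have hfy : (⟪lam, y⟫_ℝ : EReal) - conj (fun θ => (f θ : EReal)) y ≤ f lam := calc
    _ ≤ (⟪lam, y⟫_ℝ : EReal) - ((⟪lam, y⟫_ℝ - f lam : ℝ) : EReal) :=
      EReal.sub_le_sub le_rfl (coe_sub_le_conj f lam y)
    _ = f lam := by rw [← EReal.coe_sub, sub_sub_cancel]
  have hx' := (EReal.sub_lt_iff (.inr (EReal.coe_ne_bot _)) (.inr (EReal.coe_ne_top _))).mp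
    ((hexp x hx).trans_le hfy)
  have hconj : ((⟪lam, x⟫_ℝ - f lam : ℝ) : EReal) < conj (fun θ => (f θ : EReal)) x := by
    rw [EReal.coe_sub, EReal.sub_lt_iff (.inl (EReal.coe_ne_bot _)) (.inl (EReal.coe_ne_top _)),
      add_comm]
    exact hx'
  obtain ⟨μ, hμ⟩ := lt_iSup_iff.mp hconj
  rw [← EReal.coe_sub] at hμ
  exact ⟨μ, EReal.coe_lt_coe_iff.mp hμ⟩

end DWRE

theorem ld_lower_bound_general (E : DWRE d Ω)
    (Λ : EuclideanSpace ℝ (Fin d) → EReal)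
    (hΛ : ∀ lam : EuclideanSpace ℝ (Fin d),
      Filter.Tendsto (E.mgfRate lam) Filter.atTop (nhds (Λ lam))) :
    ∀ G : Set (EuclideanSpace ℝ (Fin d)), IsOpen G →
      -(⨅ x ∈ G ∩ {y : EuclideanSpace ℝ (Fin d) |
          ∃ lam ∈ interior {l' : EuclideanSpace ℝ (Fin d) | Λ l' < (⊤ : EReal)},
            ∀ x' : EuclideanSpace ℝ (Fin d), x' ≠ y →
              (((inner ℝ lam x' : ℝ)) : EReal) - conj Λ x' <
                (((inner ℝ lam y : ℝ)) : EReal) - conj Λ y},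
          conj Λ x) ≤
        Filter.liminf
          (E.rate fun n => {ω | (n : ℝ)⁻¹ • emb d (E.walk n ω) ∈ G}) Filter.atTop := by
  intro G hG
  set S : ℕ → Ω → EuclideanSpace ℝ (Fin d) := fun n ω => emb d (E.walk n ω)
  have hS : ∀ n, Measurable (S n) := fun n =>
    (Measurable.of_discrete (f := emb d)).comp (E.measurable_walk n)
  choose Λr hΛr hΛr_tendsto using fun θ => exists_tendsto_of_tendsto_coe_of_abs_le
    ((eventually_ne_atTop 0).mono fun n hn => abs_inv_mul_log_expMoment_le hS E.norm_walk_le θ hn)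
    (hΛ θ)
  obtain rfl : Λ = fun θ => (Λr θ : EReal) := funext hΛr
  rw [EReal.neg_le]
  refine le_iInf₂ fun y ⟨hyG, lam, _, hexp⟩ => EReal.neg_le.mp ?_
  calc -conj (fun θ => (Λr θ : EReal)) y ≤ ((Λr lam - ⟪lam, y⟫_ℝ : ℝ) : EReal) := by
        rw [EReal.neg_le, ← EReal.coe_neg, neg_sub]
        exact coe_sub_le_conj Λr lam y
    _ ≤ _ := le_liminf_log_measure_of_eventually fun a ha =>
        eventually_exp_mul_le_measureReal hS E.norm_walk_le hΛr_tendsto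
          (exists_lt_of_exposed hexp) (hG.mem_nhds hyG) ha

/-- lower large deviation bound, Theorem `mainmain_theorem`: for every
open set `G`, `liminf (1/n) log ℙ(X_n/n ∈ G) ≥ − inf_{x ∈ G ∩ 𝓕} Λ*(x)`, where `𝓕` is the
set of exposed points of `Λ*` whose exposing hyperplane lies in the interior of the
finiteness domain of `Λ`. -/
theorem ld_lower_bound (hd : 0 < d) (E : DWRE d Ω)
    (Λ : EuclideanSpace ℝ (Fin d) → EReal)
    (hΛ : ∀ lam : EuclideanSpace ℝ (Fin d),
      Filter.Tendsto (E.mgfRate lam) Filter.atTop (nhds (Λ lam))) :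
    ∀ G : Set (EuclideanSpace ℝ (Fin d)), IsOpen G →
      -(⨅ x ∈ G ∩ {y : EuclideanSpace ℝ (Fin d) |
          ∃ lam ∈ interior {l' : EuclideanSpace ℝ (Fin d) | Λ l' < (⊤ : EReal)},
            ∀ x' : EuclideanSpace ℝ (Fin d), x' ≠ y →
              (((inner ℝ lam x' : ℝ)) : EReal) - conj Λ x' <
                (((inner ℝ lam y : ℝ)) : EReal) - conj Λ y},
          conj Λ x) ≤
        Filter.liminf
          (E.rate fun n => {ω | (n : ℝ)⁻¹ • emb d (E.walk n ω) ∈ G}) Filter.atTop :=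
  ld_lower_bound_general E Λ hΛ
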